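/- arXiv:1907.08420 — 5 statements merged into one kernel-verified Lean document; each statement's English description precedes it below -/
import Mathlib

section
/- Let 1 ≤ p < ∞, let μ be a σ-finite positive Borel measure on (0,∞), and let f ∈ A^p(𝕌). If ∫_0^∞ t^{2/p − 1} dμ(t) < ∞, then for every z ∈ 𝕌 the integral H_μ(f)(z) = ∫_0^∞ (1/t) f(z/t) dμ(t) converges absolutely, and the function z ↦ H_μ(f)(z) is a well-defined holomorphic function on 𝕌. -/
/-
An `A^p` function on the upper half plane satisfies `|f(z)| ≤ C (Im z)^(-2/p)`: by the area mean
value property on the disc of radius `Im z / 2` and Hölder's inequality, `|f(z)|` is controlled by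
the `L^p` norm of `f` on that disc, whose area is comparable to `(Im z)^2`. Cauchy's estimate then
gives `|f'(z)| ≤ C' (Im z)^(-2/p-1)`. Since `Im (z/t) = Im z / t`, after the factor `1/t` both
bounds become multiples of `t^(2/p-1)`, locally uniformly in `z`, so the moment condition on `μ`
gives absolute convergence and, by dominated differentiation under the integral sign, holomorphy.
-/

open MeasureTheory Complex Set Filter
open scoped ENNReal NNReal Topology Real

noncomputable section

/-- The upper half plane `{z : ℂ | Im z > 0}`. -/
def UHP : Set ℂ := {z : ℂ | 0 < z.im}

/-- The `p`-th power of the Bergman `A^p(UHP)` norm: `(1/π) ∫_UHP |f|^p dA`. -/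
def apNormPow (p : ℝ) (f : ℂ → ℂ) : ℝ≥0∞ :=
  ENNReal.ofReal (1 / Real.pi) * ∫⁻ z in UHP, (‖f z‖₊ : ℝ≥0∞) ^ p

/-- The Bergman `A^p(UHP)` norm: `((1/π) ∫_UHP |f|^p dA)^(1/p)`. -/
def apNorm (p : ℝ) (f : ℂ → ℂ) : ℝ≥0∞ := apNormPow p f ^ (1 / p)

/-- Membership in the Bergman space `A^p(UHP)`: holomorphic on `UHP` with finite norm. -/
def MemAp (p : ℝ) (f : ℂ → ℂ) : Prop :=
  DifferentiableOn ℂ f UHP ∧ apNormPow p f < ⊤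

/-- The Hausdorff operator `H_μ f z = ∫_0^∞ (1/t) f(z/t) dμ(t)`. -/
def hausdorffOp (μ : Measure ℝ) (f : ℂ → ℂ) (z : ℂ) : ℂ :=
  ∫ t in Ioi (0:ℝ), (t : ℂ)⁻¹ * f (z / (t : ℂ)) ∂μ

open Metric

theorem volume_ball_eq_ofReal (c : ℂ) {R : ℝ} (hR : 0 ≤ R) :
    volume (ball c R) = ENNReal.ofReal (π * R ^ 2) := by
  rw [Complex.volume_ball, mul_comm, ENNReal.ofReal_mul Real.pi_nonneg, ENNReal.ofReal_pow hR,
    ← NNReal.coe_real_pi, ENNReal.ofReal_coe_nnreal]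

section MeanValue

variable {E : Type*} [NormedAddCommGroup E]

theorem setIntegral_ball_eq_integral_circleMap [NormedSpace ℝ E] {f : ℂ → E} {c : ℂ} {R : ℝ}
    (hf : ContinuousOn f (closedBall c R)) :
    ∫ z in ball c R, f z = ∫ r in Ioo 0 R, r • ∫ θ in Ioo (-π) π, f (circleMap c r θ) := by
  set S := Ioo (0 : ℝ) R ×ˢ Ioo (-π) π
  have hpolar (q : ℝ × ℝ) : c + Complex.polarCoord.symm q = circleMap c q.1 q.2 := by
    simp [circleMap, Complex.exp_mul_I]
  have hdist (r θ : ℝ) : dist (circleMap c r θ) c = |r| := by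
    rw [dist_eq_norm, circleMap_sub_center, norm_circleMap_zero]
  have hS : S ⊆ polarCoord.target := fun q hq => ⟨hq.1.1, hq.2⟩
  have hsupp : ∀ q ∈ polarCoord.target, q.1 • (ball c R).indicator f (circleMap c q.1 q.2)
      = S.indicator (fun q => q.1 • f (circleMap c q.1 q.2)) q := by
    rintro q ⟨hr : 0 < q.1, hθ⟩
    have hmem : circleMap c q.1 q.2 ∈ ball c R ↔ q ∈ S := by
      simp [S, mem_ball, hdist, abs_of_pos hr, hr, hθ]
    by_cases hq : q ∈ S
    · rw [indicator_of_mem hq, indicator_of_mem (hmem.2 hq)]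
    · rw [indicator_of_notMem hq, indicator_of_notMem (mt hmem.1 hq), smul_zero]
  have hint : IntegrableOn (fun q : ℝ × ℝ => q.1 • f (circleMap c q.1 q.2)) S
      (volume.prod volume) := by
    refine ContinuousOn.integrableOn_compact (isCompact_Icc.prod isCompact_Icc) ?_
      |>.mono_set (prod_mono Ioo_subset_Icc_self Ioo_subset_Icc_self)
    refine continuousOn_fst.smul (hf.comp (by fun_prop) fun q hq => ?_)
    simpa [mem_closedBall, hdist, abs_of_nonneg hq.1.1] using hq.1.2
  calc ∫ z in ball c R, f z = ∫ w, (ball c R).indicator f (c + w) := by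
        rw [← integral_indicator measurableSet_ball, integral_add_left_eq_self]
    _ = ∫ q in polarCoord.target, q.1 • (ball c R).indicator f (circleMap c q.1 q.2) := by
        simp_rw [← hpolar]
        exact (Complex.integral_comp_polarCoord_symm _).symm
    _ = ∫ q in S, q.1 • f (circleMap c q.1 q.2) := by
        rw [setIntegral_congr_fun polarCoord.open_target.measurableSet hsupp,
          setIntegral_indicator (measurableSet_Ioo.prod measurableSet_Ioo), inter_eq_right.2 hS]
    _ = ∫ r in Ioo 0 R, r • ∫ θ in Ioo (-π) π, f (circleMap c r θ) := by
        rw [Measure.volume_eq_prod, setIntegral_prod _ hint]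
        simp_rw [integral_smul]

theorem DiffContOnCl.setIntegral_ball [NormedSpace ℂ E] [CompleteSpace E] {f : ℂ → E} {c : ℂ}
    {R : ℝ} (hf : DiffContOnCl ℂ f (ball c R)) (hR : 0 < R) :
    ∫ z in ball c R, f z = (π * R ^ 2) • f c := by
  have hcircle : ∀ r ∈ Ioo 0 R, ∫ θ in Ioo (-π) π, f (circleMap c r θ) = (2 * π) • f c := by
    rintro r ⟨hr, hrR⟩
    have hmvp := (hf.mono (ball_subset_ball (abs_of_pos hr).le |>.trans
      (ball_subset_ball hrR.le))).circleAverage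
    rw [Real.circleAverage_def, inv_smul_eq_iff₀ (by positivity)] at hmvp
    rw [← integral_Ioc_eq_integral_Ioo,
      ← intervalIntegral.integral_of_le (by linarith [Real.pi_pos]), ← hmvp]
    have := ((periodic_circleMap c r).comp f).intervalIntegral_add_eq (-π) 0
    rwa [show -π + 2 * π = π by ring, zero_add] at this
  rw [setIntegral_ball_eq_integral_circleMap hf.continuousOn_ball,
    setIntegral_congr_fun measurableSet_Ioo fun r hr => by rw [hcircle r hr, smul_smul],
    integral_smul_const, ← integral_Ioc_eq_integral_Ioo, ← intervalIntegral.integral_of_le hR.le,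
    intervalIntegral.integral_mul_const, integral_id]
  ring_nf

theorem DiffContOnCl.volume_ball_rpow_mul_enorm_le [NormedSpace ℂ E] [CompleteSpace E]
    {f : ℂ → E} {c : ℂ} {R p : ℝ} (hf : DiffContOnCl ℂ f (ball c R)) (hR : 0 < R) (hp : 1 ≤ p) :
    volume (ball c R) ^ (1 / p) * ‖f c‖ₑ ≤ (∫⁻ z in ball c R, ‖f z‖ₑ ^ p) ^ (1 / p) := by
  have hvol : volume (ball c R) = ‖π * R ^ 2‖ₑ := by
    rw [volume_ball_eq_ofReal c hR.le, Real.enorm_of_nonneg (by positivity)]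
  set u := volume (ball c R)
  have hu0 : u ≠ 0 := (measure_ball_pos volume c hR).ne'
  have hutop : u ≠ ⊤ := measure_ball_lt_top.ne
  have hmean : u * ‖f c‖ₑ ≤ ∫⁻ z in ball c R, ‖f z‖ₑ := by
    rw [hvol, ← enorm_smul, ← hf.setIntegral_ball hR]
    exact enorm_integral_le_lintegral_enorm _
  have hholder : ∫⁻ z in ball c R, ‖f z‖ₑ ≤
      (∫⁻ z in ball c R, ‖f z‖ₑ ^ p) ^ (1 / p) * u ^ (1 - 1 / p) := by
    have := eLpNorm_le_eLpNorm_mul_rpow_measure_univ (μ := volume.restrict (ball c R))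
      (p := 1) (q := ENNReal.ofReal p)
      (by simpa using hp) ((hf.continuousOn_ball.mono ball_subset_closedBall).aestronglyMeasurable
        measurableSet_ball)
    rwa [eLpNorm_one_eq_lintegral_enorm,
      eLpNorm_eq_lintegral_rpow_enorm_toReal (by simp; linarith) (by simp),
      Measure.restrict_apply_univ, ENNReal.toReal_ofReal (by linarith), ENNReal.toReal_one,
      div_one] at this
  calc u ^ (1 / p) * ‖f c‖ₑ = u ^ (1 / p - 1) * (u * ‖f c‖ₑ) := by
        conv_lhs => rw [show 1 / p = 1 / p - 1 + 1 by ring, ENNReal.rpow_add _ _ hu0 hutop,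
          ENNReal.rpow_one]
        rw [mul_assoc]
    _ ≤ u ^ (1 / p - 1) * ((∫⁻ z in ball c R, ‖f z‖ₑ ^ p) ^ (1 / p) * u ^ (1 - 1 / p)) := by
        gcongr u ^ (1 / p - 1) * ?_
        exact hmean.trans hholder
    _ = (∫⁻ z in ball c R, ‖f z‖ₑ ^ p) ^ (1 / p) := by
        rw [mul_left_comm, ← ENNReal.rpow_add _ _ hu0 hutop]
        simp

end MeanValue

theorem isOpen_UHP : IsOpen UHP := isOpen_lt continuous_const continuous_im

theorem im_sub_le_im_of_mem_closedBall {c w : ℂ} {R : ℝ} (hw : w ∈ closedBall c R) :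
    c.im - R ≤ w.im := by
  have := (abs_im_le_norm (w - c)).trans (mem_closedBall_iff_norm.1 hw)
  rw [sub_im] at this
  linarith [neg_abs_le (w.im - c.im)]

theorem closedBall_subset_UHP {c : ℂ} {R : ℝ} (h : R < c.im) : closedBall c R ⊆ UHP :=
  fun w hw => show 0 < w.im by linarith [im_sub_le_im_of_mem_closedBall hw]

theorem div_ofReal_mem_UHP {z : ℂ} {t : ℝ} (hz : z ∈ UHP) (ht : 0 < t) : z / t ∈ UHP :=
  show 0 < (z / t).im by rw [div_ofReal_im]; exact div_pos hz ht

theorem MemAp.lintegral_lt_top {p : ℝ} {f : ℂ → ℂ} (hf : MemAp p f) :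
    ∫⁻ z in UHP, ‖f z‖ₑ ^ p < ⊤ :=
  ENNReal.lt_top_of_mul_ne_top_right hf.2.ne (by simp [Real.pi_pos])

theorem DifferentiableOn.exists_norm_le_im_rpow_of_lintegral_lt_top {p : ℝ} {f : ℂ → ℂ}
    (hf : DifferentiableOn ℂ f UHP) (hp : 1 ≤ p) (hI : ∫⁻ z in UHP, ‖f z‖ₑ ^ p < ⊤) :
    ∃ C, 0 ≤ C ∧ ∀ z ∈ UHP, ‖f z‖ ≤ C * z.im ^ (-(2 / p)) := by
  set K := ((∫⁻ z in UHP, ‖f z‖ₑ ^ p) ^ (1 / p)).toReal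
  have hp0 : 0 < p := by linarith
  refine ⟨K * ((π / 4) ^ (1 / p))⁻¹, by positivity, fun z (hz : 0 < z.im) => ?_⟩
  have hR : 0 < z.im / 2 := half_pos hz
  have hsub := closedBall_subset_UHP (show z.im / 2 < z.im by linarith)
  have hball := (hf.diffContOnCl_ball hsub).volume_ball_rpow_mul_enorm_le hR hp
  have hmono : (∫⁻ w in ball z (z.im / 2), ‖f w‖ₑ ^ p) ^ (1 / p) ≤
      (∫⁻ w in UHP, ‖f w‖ₑ ^ p) ^ (1 / p) := by
    gcongr
    exact ball_subset_closedBall.trans hsub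
  have hreal := ENNReal.toReal_mono (ENNReal.rpow_ne_top_of_nonneg (by positivity) hI.ne)
    (hball.trans hmono)
  rw [ENNReal.toReal_mul, ← ENNReal.toReal_rpow, volume_ball_eq_ofReal z hR.le,
    ENNReal.toReal_ofReal (by positivity), toReal_enorm] at hreal
  have hvol : (π * (z.im / 2) ^ 2) ^ (1 / p) = (π / 4) ^ (1 / p) * z.im ^ (2 / p) := by
    rw [show π * (z.im / 2) ^ 2 = π / 4 * z.im ^ 2 by ring, Real.mul_rpow (by positivity)
      (by positivity), ← Real.rpow_natCast, ← Real.rpow_mul hz.le]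
    norm_num [div_eq_mul_inv]
  rw [hvol] at hreal
  rw [Real.rpow_neg hz.le, mul_assoc, ← mul_inv, ← div_eq_mul_inv, le_div_iff₀ (by positivity)]
  linarith

theorem norm_deriv_le_of_norm_le_im_rpow {E : Type*} [NormedAddCommGroup E] [NormedSpace ℂ E]
    {g : ℂ → E} {a C : ℝ} (hg : DifferentiableOn ℂ g UHP) (ha : 0 ≤ a) (hC : 0 ≤ C)
    (hbd : ∀ w ∈ UHP, ‖g w‖ ≤ C * w.im ^ (-a)) {z : ℂ} (hz : z ∈ UHP) :
    ‖deriv g z‖ ≤ 2 ^ (a + 1) * C * z.im ^ (-(a + 1)) := by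
  have hR : 0 < z.im / 2 := half_pos hz
  have hsub := closedBall_subset_UHP (show z.im / 2 < z.im by linarith)
  have hsphere : ∀ w ∈ sphere z (z.im / 2), ‖g w‖ ≤ C * (z.im / 2) ^ (-a) := fun w hw => by
    have hw := sphere_subset_closedBall hw
    refine (hbd w (hsub hw)).trans (mul_le_mul_of_nonneg_left ?_ hC)
    exact Real.rpow_le_rpow_of_nonpos hR (by linarith [im_sub_le_im_of_mem_closedBall hw])
      (by linarith)
  refine (norm_deriv_le_of_forall_mem_sphere_norm_le hR (hg.diffContOnCl_ball hsub) hsphere).trans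
    (le_of_eq ?_)
  rw [mul_div_assoc, ← Real.rpow_sub_one hR.ne', Real.div_rpow hz.le zero_le_two,
    show -a - 1 = -(a + 1) by ring, Real.rpow_neg zero_le_two, div_inv_eq_mul]
  ring

theorem integrableOn_Ioi_rpow_of_lintegral_lt_top {μ : Measure ℝ} {e : ℝ}
    (hμ : ∫⁻ t in Ioi 0, ENNReal.ofReal (t ^ e) ∂μ < ⊤) :
    IntegrableOn (fun t : ℝ => t ^ e) (Ioi 0) μ :=
  ⟨(measurable_id.pow_const e).aestronglyMeasurable, (hasFiniteIntegral_iff_ofReal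
    (ae_restrict_of_forall_mem measurableSet_Ioi fun _ ht => Real.rpow_nonneg (le_of_lt ht) e)).2
    hμ⟩

theorem inv_mul_div_rpow_neg {s t : ℝ} (hs : 0 ≤ s) (ht : 0 < t) (b : ℝ) :
    t⁻¹ * (s / t) ^ (-b) = s ^ (-b) * t ^ (b - 1) := by
  rw [Real.div_rpow hs ht.le, Real.rpow_neg ht.le, div_inv_eq_mul, Real.rpow_sub_one ht.ne']
  ring

theorem aestronglyMeasurable_comp_div_ofReal {E : Type*} [NormedAddCommGroup E] {h : ℂ → E}
    (hh : ContinuousOn h UHP) {z : ℂ} (hz : z ∈ UHP) (μ : Measure ℝ) :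
    AEStronglyMeasurable (fun t : ℝ => h (z / t)) (μ.restrict (Ioi 0)) :=
  (hh.comp (continuousOn_const.div continuous_ofReal.continuousOn
    fun _ ht => ofReal_ne_zero.2 (ne_of_gt ht)) fun _ ht => div_ofReal_mem_UHP hz ht)
    |>.aestronglyMeasurable measurableSet_Ioi

theorem aestronglyMeasurable_ofReal_inv (μ : Measure ℝ) :
    AEStronglyMeasurable (fun t : ℝ => (t : ℂ)⁻¹) μ :=
  (measurable_ofReal.inv).aestronglyMeasurable

theorem integrableOn_hausdorffOp_integrand {μ : Measure ℝ} {g : ℂ → ℂ} {a C : ℝ}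
    (hg : ContinuousOn g UHP) (hbd : ∀ w ∈ UHP, ‖g w‖ ≤ C * w.im ^ (-a))
    (hμ : ∫⁻ t in Ioi 0, ENNReal.ofReal (t ^ (a - 1)) ∂μ < ⊤) {z : ℂ} (hz : z ∈ UHP) :
    IntegrableOn (fun t : ℝ => (t : ℂ)⁻¹ * g (z / t)) (Ioi 0) μ := by
  refine ((integrableOn_Ioi_rpow_of_lintegral_lt_top hμ).const_mul (C * z.im ^ (-a))).mono'
    ((aestronglyMeasurable_ofReal_inv _).mul (aestronglyMeasurable_comp_div_ofReal hg hz μ))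
    (ae_restrict_of_forall_mem measurableSet_Ioi fun t (ht : 0 < t) => ?_)
  calc ‖(t : ℂ)⁻¹ * g (z / t)‖ = t⁻¹ * ‖g (z / t)‖ := by
        rw [norm_mul, norm_inv, norm_real, Real.norm_of_nonneg ht.le]
    _ ≤ t⁻¹ * (C * (z.im / t) ^ (-a)) := by
        gcongr
        simpa only [div_ofReal_im] using hbd _ (div_ofReal_mem_UHP hz ht)
    _ = C * z.im ^ (-a) * t ^ (a - 1) := by
        rw [mul_left_comm, inv_mul_div_rpow_neg (le_of_lt hz) ht, mul_assoc]

theorem hasDerivAt_inv_mul_comp_div_ofReal {g : ℂ → ℂ} (hg : DifferentiableOn ℂ g UHP) {t : ℝ}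
    (ht : 0 < t) {z : ℂ} (hz : z ∈ UHP) :
    HasDerivAt (fun w => (t : ℂ)⁻¹ * g (w / t)) ((t : ℂ)⁻¹ * ((t : ℂ)⁻¹ * deriv g (z / t))) z := by
  have hdiv : HasDerivAt (fun w : ℂ => w / t) (t : ℂ)⁻¹ z := by
    simpa using (hasDerivAt_id z).div_const (t : ℂ)
  have := ((hg.differentiableAt (isOpen_UHP.mem_nhds (div_ofReal_mem_UHP hz ht))).hasDerivAt.comp
    z hdiv).const_mul (t : ℂ)⁻¹
  simpa only [Function.comp_def, mul_comm (deriv g _)] using this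

theorem differentiableOn_hausdorffOp {μ : Measure ℝ} {g : ℂ → ℂ} {a C : ℝ}
    (hg : DifferentiableOn ℂ g UHP) (ha : 0 ≤ a) (hC : 0 ≤ C)
    (hbd : ∀ w ∈ UHP, ‖g w‖ ≤ C * w.im ^ (-a))
    (hμ : ∫⁻ t in Ioi 0, ENNReal.ofReal (t ^ (a - 1)) ∂μ < ⊤) :
    DifferentiableOn ℂ (hausdorffOp μ g) UHP := by
  intro z₀ (hz₀ : 0 < z₀.im)
  set ε := z₀.im / 2 with hε_def
  have hε : 0 < ε := half_pos hz₀
  have him : ∀ z ∈ ball z₀ ε, ε ≤ z.im := fun z hz => by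
    linarith [im_sub_le_im_of_mem_closedBall (ball_subset_closedBall hz), hε_def]
  have hmem : ∀ z ∈ ball z₀ ε, z ∈ UHP := fun z hz => hε.trans_le (him z hz)
  set D := 2 ^ (a + 1) * C
  have hbound : ∀ t ∈ Ioi (0 : ℝ), ∀ z ∈ ball z₀ ε,
      ‖(t : ℂ)⁻¹ * ((t : ℂ)⁻¹ * deriv g (z / t))‖ ≤ D * ε ^ (-(a + 1)) * t ^ (a - 1) := by
    intro t (ht : 0 < t) z hz
    have hderiv :=
      norm_deriv_le_of_norm_le_im_rpow hg ha hC hbd (div_ofReal_mem_UHP (hmem z hz) ht)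
    rw [div_ofReal_im] at hderiv
    calc ‖(t : ℂ)⁻¹ * ((t : ℂ)⁻¹ * deriv g (z / t))‖ = t⁻¹ * (t⁻¹ * ‖deriv g (z / t)‖) := by
          rw [norm_mul, norm_mul, norm_inv, norm_real, Real.norm_of_nonneg ht.le]
      _ ≤ t⁻¹ * (t⁻¹ * (D * (ε / t) ^ (-(a + 1)))) := by
          gcongr
          refine hderiv.trans (mul_le_mul_of_nonneg_left ?_ (by positivity))
          exact Real.rpow_le_rpow_of_nonpos (by positivity) (by gcongr; exact him z hz)
            (by linarith)
      _ = D * ε ^ (-(a + 1)) * t ^ (a - 1) := by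
          rw [mul_left_comm t⁻¹ D, inv_mul_div_rpow_neg hε.le ht, add_sub_cancel_right,
            Real.rpow_sub_one ht.ne']
          field_simp
  have hdom := hasDerivAt_integral_of_dominated_loc_of_deriv_le (μ := μ.restrict (Ioi 0))
    (F := fun z (t : ℝ) => (t : ℂ)⁻¹ * g (z / t))
    (F' := fun z (t : ℝ) => (t : ℂ)⁻¹ * ((t : ℂ)⁻¹ * deriv g (z / t)))
    (ball_mem_nhds z₀ hε)
    (eventually_of_mem (isOpen_UHP.mem_nhds hz₀) fun z hz =>
      (aestronglyMeasurable_ofReal_inv _).mul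
        (aestronglyMeasurable_comp_div_ofReal hg.continuousOn hz μ))
    (integrableOn_hausdorffOp_integrand hg.continuousOn hbd hμ hz₀)
    ((aestronglyMeasurable_ofReal_inv _).mul ((aestronglyMeasurable_ofReal_inv _).mul
      (aestronglyMeasurable_comp_div_ofReal
        ((hg.analyticOnNhd isOpen_UHP).deriv.continuousOn) hz₀ μ)))
    (ae_restrict_of_forall_mem measurableSet_Ioi hbound)
    ((integrableOn_Ioi_rpow_of_lintegral_lt_top hμ).const_mul _)
    (ae_restrict_of_forall_mem measurableSet_Ioi fun t ht z hz =>
      hasDerivAt_inv_mul_comp_div_ofReal hg ht (hmem z hz))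
  exact hdom.2.differentiableAt.differentiableWithinAt

theorem stmt0_general (p : ℝ) (hp : 1 ≤ p) (μ : Measure ℝ)
    (f : ℂ → ℂ) (hf : MemAp p f)
    (hμ : ∫⁻ t in Ioi (0:ℝ), ENNReal.ofReal (t ^ (2 / p - 1)) ∂μ < ⊤) :
    (∀ z ∈ UHP, IntegrableOn (fun t : ℝ => (t : ℂ)⁻¹ * f (z / (t : ℂ))) (Ioi 0) μ) ∧
    DifferentiableOn ℂ (hausdorffOp μ f) UHP := by
  obtain ⟨C, hC, hbd⟩ := hf.1.exists_norm_le_im_rpow_of_lintegral_lt_top hp hf.lintegral_lt_top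
  exact ⟨fun z hz => integrableOn_hausdorffOp_integrand hf.1.continuousOn hbd hμ hz,
    differentiableOn_hausdorffOp hf.1 (by positivity) hC hbd hμ⟩

theorem stmt0 (p : ℝ) (hp : 1 ≤ p) (μ : Measure ℝ) [SigmaFinite μ]
    (f : ℂ → ℂ) (hf : MemAp p f)
    (hμ : ∫⁻ t in Ioi (0:ℝ), ENNReal.ofReal (t ^ (2 / p - 1)) ∂μ < ⊤) :
    (∀ z ∈ UHP, IntegrableOn (fun t : ℝ => (t : ℂ)⁻¹ * f (z / (t : ℂ))) (Ioi 0) μ) ∧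
    DifferentiableOn ℂ (hausdorffOp μ f) UHP :=
  stmt0_general p hp μ f hf hμ
end
end

section
/- Let λ > 0 and δ > 0, and let g_{λ,δ}(z) = |z + δi|^{-(2+λ)/p}, so that ||g_{λ,δ}||_{L^p(dA)}^p = (1/π)∫_𝕌 |z + δi|^{-(2+λ)} dA(z). Then (1/2)^{2+λ} · 1/(λ δ^λ) ≤ ||g_{λ,δ}||_{L^p(dA)}^p ≤ 2^{(2+λ)/2} · 1/(λ δ^λ). -/
/-!
On the upper half plane, `w = z + δi` has `|Re w| + |Im w| = |Re z| + Im z + δ`, and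
`‖w‖ ≤ |Re w| + |Im w| ≤ √2 ‖w‖`. Replacing `‖w‖` by this ℓ¹-norm therefore changes the
integrand `‖w‖^{-(2+λ)}` by a factor between `1` and `2^{(2+λ)/2}`, and the ℓ¹ version is
computed exactly by Fubini: integrating `(|x| + y + δ)^{-(2+λ)}` first in `y > 0`, then in `x`,
gives `2 / ((1 + λ) λ δ^λ)`. Finally the factor `2 / (π (1 + λ))` lies between `(1/2)^{2+λ}`
(by Bernoulli's inequality `2 + λ ≤ 2^{1+λ}`) and `1`.
-/

open MeasureTheory Complex Set Filter
open scoped ENNReal NNReal Topology Real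

noncomputable section

theorem lintegral_comp_abs (f : ℝ → ℝ≥0∞) :
    ∫⁻ x, f |x| = 2 * ∫⁻ x in Ioi 0, f x := by
  have hpos : ∫⁻ x in Ioi 0, f |x| = ∫⁻ x in Ioi 0, f x :=
    setLIntegral_congr_fun measurableSet_Ioi fun x (hx : 0 < x) => by rw [abs_of_pos hx]
  have hneg : ∫⁻ x in Iic 0, f |x| = ∫⁻ x in Ioi 0, f x := by
    have h := (Measure.measurePreserving_neg volume).setLIntegral_comp_preimage_emb
      (Homeomorph.neg ℝ).measurableEmbedding (fun x => f |x|) (Ici 0)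
    simp only [abs_neg, neg_preimage, neg_Ici, neg_zero] at h
    rw [← hpos, h, Measure.restrict_congr_set Ioi_ae_eq_Ici]
  rw [← lintegral_add_compl _ measurableSet_Ioi, compl_Ioi, hpos, hneg, two_mul]

theorem lintegral_Ioi_add_rpow_neg_one_sub {c s : ℝ} (hc : 0 < c) (hs : 0 < s) :
    ∫⁻ y in Ioi 0, ENNReal.ofReal ((y + c) ^ (-(1 + s))) = ENNReal.ofReal (c ^ (-s) / s) := by
  have ha : -(1 + s) < -1 := by linarith
  have h := (measurePreserving_add_right volume c).setLIntegral_comp_preimage_emb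
    (Homeomorph.addRight c).measurableEmbedding (fun x => ENNReal.ofReal (x ^ (-(1 + s)))) (Ioi c)
  rw [preimage_add_const_Ioi, sub_self] at h
  rw [h, ← ofReal_integral_eq_lintegral_ofReal (integrableOn_Ioi_rpow_of_lt ha hc)
    ((ae_restrict_iff' measurableSet_Ioi).2 (ae_of_all _ fun x hx =>
      Real.rpow_nonneg (hc.trans hx).le _)), integral_Ioi_rpow_of_lt ha hc]
  congr 1
  rw [show -(1 + s) + 1 = -s by ring, neg_div_neg_eq]

theorem setLIntegral_UHP_eq_lintegral_lintegral (G : ℝ → ℝ → ℝ≥0∞)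
    (hG : Measurable fun p : ℝ × ℝ => G p.1 p.2) :
    ∫⁻ z in UHP, G z.re z.im = ∫⁻ x, ∫⁻ y in Ioi 0, G x y := by
  have hpre : measurableEquivRealProd ⁻¹' (univ ×ˢ Ioi 0) = UHP := by
    ext z; simp [UHP, measurableEquivRealProd_apply]
  have h := volume_preserving_equiv_real_prod.setLIntegral_comp_preimage_emb
    measurableEquivRealProd.measurableEmbedding (fun p => G p.1 p.2) (univ ×ˢ Ioi 0)
  rw [hpre] at h
  simp only [measurableEquivRealProd_apply] at h
  rw [h, Measure.volume_eq_prod, ← Measure.prod_restrict, Measure.restrict_univ,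
    lintegral_prod _ hG.aemeasurable]

theorem lintegral_UHP_abs_re_add_im_add_rpow {l δ : ℝ} (hl : 0 < l) (hδ : 0 < δ) :
    ∫⁻ z in UHP, ENNReal.ofReal ((|z.re| + z.im + δ) ^ (-(2 + l))) =
      ENNReal.ofReal (2 / (1 + l) * (1 / (l * δ ^ l))) := by
  have hinner : ∀ x : ℝ, ∫⁻ y in Ioi 0, ENNReal.ofReal ((|x| + y + δ) ^ (-(2 + l))) =
      ENNReal.ofReal ((|x| + δ) ^ (-(1 + l))) * ENNReal.ofReal (1 / (1 + l)) := by
    intro x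
    simp_rw [show ∀ y, |x| + y + δ = y + (|x| + δ) from fun y => by ring,
      show (2 : ℝ) + l = 1 + (1 + l) by ring]
    rw [lintegral_Ioi_add_rpow_neg_one_sub (by positivity) (by positivity),
      ← ENNReal.ofReal_mul (by positivity), div_eq_mul_one_div]
  rw [setLIntegral_UHP_eq_lintegral_lintegral
    (fun x y => ENNReal.ofReal ((|x| + y + δ) ^ (-(2 + l)))) (by fun_prop)]
  simp_rw [hinner]
  rw [lintegral_mul_const _ (by fun_prop),
    lintegral_comp_abs (fun x => ENNReal.ofReal ((x + δ) ^ (-(1 + l)))),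
    lintegral_Ioi_add_rpow_neg_one_sub hδ hl, ← ENNReal.ofReal_ofNat 2,
    ← ENNReal.ofReal_mul zero_le_two, ← ENNReal.ofReal_mul (by positivity)]
  congr 1
  rw [Real.rpow_neg hδ.le]
  field_simp

theorem abs_re_add_abs_im_le_sqrt_two_mul_norm (w : ℂ) : |w.re| + |w.im| ≤ √2 * ‖w‖ := by
  rw [← Real.sqrt_sq (norm_nonneg w), ← Real.sqrt_mul zero_le_two]
  apply Real.le_sqrt_of_sq_le
  rw [Complex.sq_norm, normSq_apply]
  nlinarith [sq_nonneg (|w.re| - |w.im|), sq_abs w.re, sq_abs w.im]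

theorem rpow_norm_le_two_rpow_mul_rpow_abs_re_add_abs_im {w : ℂ} (hw : w ≠ 0) {a : ℝ}
    (ha : a ≤ 0) : ‖w‖ ^ a ≤ 2 ^ (-a / 2) * (|w.re| + |w.im|) ^ a := by
  have hw0 : 0 < ‖w‖ := norm_pos_iff.2 hw
  have hl1 : 0 < |w.re| + |w.im| := hw0.trans_le (norm_le_abs_re_add_abs_im w)
  calc ‖w‖ ^ a ≤ ((|w.re| + |w.im|) / √2) ^ a :=
        Real.rpow_le_rpow_of_nonpos (by positivity)
          ((div_le_iff₀ (by positivity)).2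
            (by linarith [abs_re_add_abs_im_le_sqrt_two_mul_norm w]))
          ha
    _ = 2 ^ (-a / 2) * (|w.re| + |w.im|) ^ a := by
        rw [Real.div_rpow hl1.le (Real.sqrt_nonneg 2), Real.sqrt_eq_rpow,
          ← Real.rpow_mul zero_le_two, div_eq_mul_inv, ← Real.rpow_neg zero_le_two, mul_comm,
          neg_div, one_div_mul_eq_div]

theorem lintegral_UHP_rpow_norm_add_mul_I_bounds {l δ : ℝ} (hl : 0 < l) (hδ : 0 < δ) :
    ENNReal.ofReal (2 / (1 + l) * (1 / (l * δ ^ l))) ≤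
        ∫⁻ z in UHP, ENNReal.ofReal (‖z + δ * I‖ ^ (-(2 + l))) ∧
      ∫⁻ z in UHP, ENNReal.ofReal (‖z + δ * I‖ ^ (-(2 + l))) ≤
        ENNReal.ofReal (2 ^ ((2 + l) / 2)) * ENNReal.ofReal (2 / (1 + l) * (1 / (l * δ ^ l))) := by
  have hshift : ∀ z ∈ UHP, z + δ * I ≠ 0 ∧
      |(z + δ * I).re| + |(z + δ * I).im| = |z.re| + z.im + δ := by
    intro z (hz : 0 < z.im)
    have him : (z + δ * I).im = z.im + δ := by simp
    refine ⟨fun h => by rw [h, zero_im] at him; linarith, ?_⟩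
    simp [abs_of_pos (add_pos hz hδ), add_assoc]
  rw [← lintegral_UHP_abs_re_add_im_add_rpow hl hδ, ← lintegral_const_mul _ (by fun_prop)]
  constructor
  · refine setLIntegral_mono (by fun_prop) fun z hz => ENNReal.ofReal_le_ofReal ?_
    rw [← (hshift z hz).2]
    exact Real.rpow_le_rpow_of_nonpos (norm_pos_iff.2 (hshift z hz).1)
      (norm_le_abs_re_add_abs_im _) (by linarith)
  · refine setLIntegral_mono (by fun_prop) fun z hz => ?_
    rw [← ENNReal.ofReal_mul (by positivity), ← (hshift z hz).2]
    refine ENNReal.ofReal_le_ofReal ?_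
    simpa only [neg_neg] using
      rpow_norm_le_two_rpow_mul_rpow_abs_re_add_abs_im (hshift z hz).1 (a := -(2 + l)) (by linarith)

theorem half_rpow_two_add_le_two_div_pi_one_add {l : ℝ} (hl : 0 ≤ l) :
    (1 / 2 : ℝ) ^ (2 + l) ≤ 1 / π * (2 / (1 + l)) := by
  have hbern := one_add_mul_self_le_rpow_one_add (s := 1) (by norm_num) (p := 1 + l) (by linarith)
  rw [mul_one, one_add_one_eq_two] at hbern
  rw [one_div, Real.inv_rpow zero_le_two, show (2 : ℝ) + l = 1 + (1 + l) by ring,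
    Real.rpow_add two_pos, Real.rpow_one, div_mul_div_comm, one_mul, inv_eq_one_div,
    div_le_div_iff₀ (by positivity) (by positivity)]
  nlinarith [Real.pi_le_four, Real.pi_pos]

theorem stmt2 (l δ : ℝ) (hl : 0 < l) (hδ : 0 < δ) :
    ENNReal.ofReal ((1/2 : ℝ) ^ (2 + l) * (1 / (l * δ ^ l))) ≤
      ENNReal.ofReal (1 / Real.pi) *
        (∫⁻ z in UHP, ENNReal.ofReal (‖z + δ * Complex.I‖ ^ (-(2 + l)))) ∧
    ENNReal.ofReal (1 / Real.pi) *
        (∫⁻ z in UHP, ENNReal.ofReal (‖z + δ * Complex.I‖ ^ (-(2 + l)))) ≤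
      ENNReal.ofReal ((2 : ℝ) ^ ((2 + l) / 2) * (1 / (l * δ ^ l))) := by
  obtain ⟨hlow, hup⟩ := lintegral_UHP_rpow_norm_add_mul_I_bounds hl hδ
  set D := 1 / (l * δ ^ l)
  set C : ℝ := 2 ^ ((2 + l) / 2)
  have hpi : 1 / π * (2 / (1 + l)) ≤ 1 := by
    rw [div_mul_div_comm, one_mul, div_le_one (by positivity)]
    nlinarith [Real.pi_gt_three]
  constructor
  · calc ENNReal.ofReal ((1 / 2) ^ (2 + l) * D)
        ≤ ENNReal.ofReal (1 / π * (2 / (1 + l) * D)) := by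
          rw [← mul_assoc]
          exact ENNReal.ofReal_le_ofReal (mul_le_mul_of_nonneg_right
            (half_rpow_two_add_le_two_div_pi_one_add hl.le) (by positivity))
      _ = ENNReal.ofReal (1 / π) * ENNReal.ofReal (2 / (1 + l) * D) :=
          ENNReal.ofReal_mul (by positivity)
      _ ≤ _ := mul_le_mul_right hlow _
  · calc _ ≤ ENNReal.ofReal (1 / π) * (ENNReal.ofReal C * ENNReal.ofReal (2 / (1 + l) * D)) :=
          mul_le_mul_right hup _
      _ = ENNReal.ofReal (C * D * (1 / π * (2 / (1 + l)))) := by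
          rw [← ENNReal.ofReal_mul (by positivity), ← ENNReal.ofReal_mul (by positivity)]
          congr 1
          ring
      _ ≤ ENNReal.ofReal (C * D) :=
          ENNReal.ofReal_le_ofReal (mul_le_of_le_one_right (by positivity) hpi)
end
end

section
/- Let 1 < p ≤ 2 and ε > 0 with 1 < 2/p + ε < 2. Then there exists a constant C(p) > 0 such that for every z in the sector A_{[π/4, π/2]} = {z ∈ 𝕌 : π/4 ≤ arg z ≤ π/2}, one has |Im f_ε(z)| > C(p) |Im φ_ε(z)| · |f_ε(z)|. In fact one may take C(p) = min{sin(aπ/2), √2/2} for any a with 2/p + ε < a < 2. -/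
open MeasureTheory Complex Set Filter
open scoped ENNReal NNReal Topology Real

noncomputable section

/-- The test function `f_ε(z) = (z + εi)^{-(2/p+ε)}` (principal branch). -/
def testf (p ε : ℝ) (z : ℂ) : ℂ := (z + ε * Complex.I) ^ ((-(2 / p + ε) : ℝ) : ℂ)

/-- The function `φ_ε(z) = conj(z + εi)/|z + εi|`. -/
def testphi (ε : ℝ) (z : ℂ) : ℂ :=
  (starRingEnd ℂ) (z + ε * Complex.I) / ((‖z + ε * Complex.I‖ : ℝ) : ℂ)

/-!
Write `w = z + εi` and `θ = arg w`, so that `0 < θ ≤ π/2` on the closed first quadrant, and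
`s = 2/p + ε`. Then `|Im φ_ε(z)| = sin θ` and `|Im f_ε(z)| = |f_ε(z)| sin (sθ)`, so the claim is
`C sin θ < sin (sθ)` for `1 < s < a ≤ 2`. If `sθ ≤ π/2` this follows from `C ≤ √2/2 < 1` and the
monotonicity of `sin` on `[θ, sθ]`; otherwise `π/2 < sθ < aπ/2 ≤ π`, where `sin` decreases, so
`sin (sθ) > sin (aπ/2) ≥ C`.
-/

lemma mul_sin_lt_sin_mul {s a c θ : ℝ} (hs : 1 ≤ s) (hsa : s < a) (ha : a ≤ 2)
    (hc₀ : 0 ≤ c) (hc₁ : c < 1) (hca : c ≤ Real.sin (a * π / 2))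
    (hθ₀ : 0 < θ) (hθ : θ ≤ π / 2) :
    c * Real.sin θ < Real.sin (s * θ) := by
  have hπ := Real.pi_pos
  have hsinθ : 0 < Real.sin θ := Real.sin_pos_of_pos_of_lt_pi hθ₀ (by linarith)
  have hθsθ : θ ≤ s * θ := le_mul_of_one_le_left hθ₀.le hs
  rcases le_or_gt (s * θ) (π / 2) with hsθ | hsθ
  · calc c * Real.sin θ < Real.sin θ := mul_lt_of_lt_one_left hsinθ hc₁
      _ ≤ Real.sin (s * θ) := Real.sin_le_sin_of_le_of_le_pi_div_two (by linarith) hsθ hθsθ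
  · have hsθa : s * θ < a * π / 2 :=
      calc s * θ ≤ s * (π / 2) := by gcongr
        _ < a * π / 2 := by nlinarith
    calc c * Real.sin θ ≤ c := mul_le_of_le_one_right hc₀ (Real.sin_le_one θ)
      _ ≤ Real.sin (a * π / 2) := hca
      _ < Real.sin (s * θ) := by
        rw [← Real.sin_pi_sub (a * π / 2), ← Real.sin_pi_sub (s * θ)]
        exact Real.sin_lt_sin_of_lt_of_le_pi_div_two (by nlinarith) (by linarith) (by linarith)

lemma abs_im_cpow_ofReal {w : ℂ} (hw : w ≠ 0) (x : ℝ) :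
    |(w ^ (x : ℂ)).im| = ‖w ^ (x : ℂ)‖ * |Real.sin (x * arg w)| := by
  rw [cpow_def_of_ne_zero hw, exp_im, norm_exp, abs_mul, abs_of_pos (Real.exp_pos _), mul_im, log_im, ofReal_re, ofReal_im, mul_zero, zero_add, mul_comm (arg w)]

lemma im_conj_div_norm (w : ℂ) : (starRingEnd ℂ w / (‖w‖ : ℂ)).im = -Real.sin (arg w) := by
  rw [div_ofReal_im, conj_im, sin_arg, neg_div]

lemma arg_mem_Ioc_zero_pi_div_two {w : ℂ} (hre : 0 ≤ w.re) (him : 0 < w.im) :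
    arg w ∈ Set.Ioc 0 (π / 2) := by
  refine ⟨(arg_nonneg_iff.mpr him.le).lt_of_ne fun h ↦ ?_, arg_le_pi_div_two_iff.mpr (.inl hre)⟩
  exact him.ne' (arg_eq_zero_iff.mp h.symm).2

theorem stmt4_general (p ε : ℝ) (hε : 0 < ε)
    (h1 : 1 < 2 / p + ε)
    (a : ℝ) (ha1 : 2 / p + ε < a) (ha2 : a < 2) :
    0 < min (Real.sin (a * π / 2)) (Real.sqrt 2 / 2) ∧
    ∀ z : ℂ, 0 < z.im → π / 4 ≤ z.arg → z.arg ≤ π / 2 →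
      min (Real.sin (a * π / 2)) (Real.sqrt 2 / 2) * |(testphi ε z).im| *
          ‖testf p ε z‖ < |(testf p ε z).im| := by
  set s := 2 / p + ε
  set C := min (Real.sin (a * π / 2)) (Real.sqrt 2 / 2)
  have hπ := Real.pi_pos
  have hC : 0 < C := lt_min (Real.sin_pos_of_pos_of_lt_pi (by nlinarith) (by nlinarith))
    (by positivity)
  refine ⟨hC, fun z hz _ hz2 ↦ ?_⟩
  set w := z + ε * I
  have hzre : 0 ≤ z.re := (arg_le_pi_div_two_iff.mp hz2).resolve_right hz.not_gt
  obtain ⟨hθ₀, hθ⟩ := arg_mem_Ioc_zero_pi_div_two (w := w) (by simpa [w] using hzre)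
    (by simp [w]; linarith)
  have hw : w ≠ 0 := fun h ↦ by simp [h] at hθ₀
  have hC₁ : C < 1 := (min_le_right _ _).trans_lt (by linarith [Real.sqrt_two_lt_three_halves])
  have hsinθ : 0 < Real.sin (arg w) := Real.sin_pos_of_pos_of_lt_pi hθ₀ (by linarith)
  have hsin := mul_sin_lt_sin_mul h1.le ha1 ha2.le hC.le hC₁ (min_le_left _ _) hθ₀ hθ
  have hphi : |(testphi ε z).im| = Real.sin (arg w) := by
    rw [testphi, im_conj_div_norm, abs_neg, abs_of_pos hsinθ]
  have hf : |(testf p ε z).im| = ‖testf p ε z‖ * Real.sin (s * arg w) := by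
    rw [testf, abs_im_cpow_ofReal hw, neg_mul, Real.sin_neg, abs_neg,
      abs_of_pos ((mul_pos hC hsinθ).trans hsin)]
  have hnorm : 0 < ‖testf p ε z‖ := norm_pos_iff.mpr (show w ^ _ ≠ 0 by simp [hw])
  rw [hphi, hf, mul_comm ‖testf p ε z‖]
  exact mul_lt_mul_of_pos_right hsin hnorm

theorem stmt4 (p ε : ℝ) (hp1 : 1 < p) (hp2 : p ≤ 2) (hε : 0 < ε)
    (h1 : 1 < 2 / p + ε) (h2 : 2 / p + ε < 2)
    (a : ℝ) (ha1 : 2 / p + ε < a) (ha2 : a < 2) :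
    0 < min (Real.sin (a * π / 2)) (Real.sqrt 2 / 2) ∧
    ∀ z : ℂ, 0 < z.im → π / 4 ≤ z.arg → z.arg ≤ π / 2 →
      min (Real.sin (a * π / 2)) (Real.sqrt 2 / 2) * |(testphi ε z).im| *
          ‖testf p ε z‖ < |(testf p ε z).im| :=
  stmt4_general p ε hε h1 a ha1 ha2
end
end

section
/- Let p = 1, let 0 < θ₀ < π/16 and ε > 0 satisfy (2 + ε)(π/2 + θ₀) < 5π/4. Then for every z in the sector A_{[π/2, π/2+θ₀]} = {z ∈ 𝕌 : π/2 ≤ arg z ≤ π/2 + θ₀}, one has |Re f_ε(z)| > |Re φ_ε(z)| · |f_ε(z)|, where f_ε(z) = (z + εi)^{−(2+ε)}. -/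
open MeasureTheory Complex Set Filter
open scoped ENNReal NNReal Topology Real

noncomputable section

/-!
With `w = z + εi` and `t = arg w` we have `Re φ_ε(z) = cos t` and
`Re f_ε(z) = |f_ε(z)| cos((2 + ε) t)`, so the claim is `|cos t| < |cos((2 + ε) t)|`.
Adding `εi` moves a point of the second quadrant towards the imaginary axis, so
`π/2 ≤ t ≤ arg z ≤ π/2 + θ₀`. The hypothesis then gives `π < (2 + ε) t < 5π/4`, hence
`|cos((2 + ε) t)| > √2/2`, while `t < 5π/8` gives `|cos t| < √2/2`.
-/

namespace Complex

lemma re_nonpos_of_pi_div_two_le_arg {z : ℂ} (h : π / 2 ≤ arg z) : z.re ≤ 0 := by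
  by_contra! hre
  exact h.not_gt (arg_lt_pi_div_two_iff.2 (Or.inl hre))

lemma pi_div_two_le_arg_of_re_nonpos {z : ℂ} (hre : z.re ≤ 0) (him : 0 < z.im) :
    π / 2 ≤ arg z := by
  by_contra! h
  rcases arg_lt_pi_div_two_iff.1 h with h | h | rfl
  · linarith
  · linarith
  · simp at him

lemma norm_le_norm_add_ofReal_mul_I {z : ℂ} (hz : 0 ≤ z.im) {ε : ℝ} (hε : 0 ≤ ε) :
    ‖z‖ ≤ ‖z + ε * I‖ := by
  rw [← sq_le_sq₀ (norm_nonneg _) (norm_nonneg _), Complex.sq_norm, Complex.sq_norm,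
    normSq_apply, normSq_apply]
  simp only [add_re, add_im, mul_re, mul_im, ofReal_re, ofReal_im, I_re, I_im]
  nlinarith

lemma arg_add_ofReal_mul_I_le {z : ℂ} (hz : 0 < z.im) (hre : z.re ≤ 0) {ε : ℝ} (hε : 0 ≤ ε) :
    arg (z + ε * I) ≤ arg z := by
  have hw : 0 < (z + ε * I).im := by simpa using add_pos_of_pos_of_nonneg hz hε
  have hnorm := norm_le_norm_add_ofReal_mul_I hz.le hε
  have hz0 : 0 < ‖z‖ := norm_pos_iff.2 (ne_of_apply_ne im hz.ne')
  rw [arg_of_im_pos hw, arg_of_im_pos hz]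
  refine Real.arccos_le_arccos ?_
  rw [show (z + ε * I).re = z.re by simp, div_le_div_iff₀ hz0 (hz0.trans_le hnorm)]
  nlinarith

end Complex

namespace Real

lemma abs_cos_lt_sqrt_two_div_two {t : ℝ} (h₁ : π / 2 ≤ t) (h₂ : t < 3 * π / 4) :
    |cos t| < √2 / 2 := by
  have hneg : cos t ≤ 0 := cos_nonpos_of_pi_div_two_le_of_le h₁ (by linarith [pi_pos])
  have hlt : cos (3 * π / 4) < cos t :=
    cos_lt_cos_of_nonneg_of_le_pi (by linarith [pi_pos]) (by linarith [pi_pos]) h₂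
  rw [show 3 * π / 4 = π - π / 4 by ring, cos_pi_sub, cos_pi_div_four] at hlt
  rw [abs_of_nonpos hneg]
  linarith

lemma sqrt_two_div_two_lt_abs_cos {u : ℝ} (h₁ : π < u) (h₂ : u < 5 * π / 4) :
    √2 / 2 < |cos u| := by
  have hlt : cos (2 * π - u) < cos (3 * π / 4) :=
    cos_lt_cos_of_nonneg_of_le_pi (by linarith [pi_pos]) (by linarith) (by linarith)
  rw [cos_two_pi_sub, show 3 * π / 4 = π - π / 4 by ring, cos_pi_sub, cos_pi_div_four] at hlt
  linarith [neg_le_abs (cos u)]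

lemma abs_cos_lt_abs_cos_mul {a t : ℝ} (ha : 2 < a) (ht : π / 2 ≤ t) (hat : a * t < 5 * π / 4) :
    |cos t| < |cos (a * t)| := by
  have hπ := pi_pos
  calc |cos t| < √2 / 2 := abs_cos_lt_sqrt_two_div_two ht (by nlinarith)
    _ < |cos (a * t)| := sqrt_two_div_two_lt_abs_cos (by nlinarith) hat

end Real

lemma testphi_re {ε : ℝ} {z : ℂ} (hz : z + ε * I ≠ 0) :
    (testphi ε z).re = Real.cos (arg (z + ε * I)) := by
  rw [cos_arg hz, testphi, div_ofReal_re, conj_re]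

lemma abs_re_testf (p ε : ℝ) (z : ℂ) :
    |(testf p ε z).re| = ‖testf p ε z‖ * |Real.cos ((2 / p + ε) * arg (z + ε * I))| := by
  rw [testf, cpow_ofReal_re, norm_cpow_real, abs_mul, abs_of_nonneg (by positivity),
    mul_neg, Real.cos_neg, mul_comm (arg _)]

lemma norm_testf_pos {p ε : ℝ} {z : ℂ} (hz : z + ε * I ≠ 0) : 0 < ‖testf p ε z‖ := by
  rw [testf, norm_cpow_real]
  exact Real.rpow_pos_of_pos (norm_pos_iff.2 hz) _

theorem stmt5_general (ε θ₀ : ℝ) (hε : 0 < ε)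
    (h : (2 + ε) * (π / 2 + θ₀) < 5 * π / 4) :
    ∀ z : ℂ, 0 < z.im → π / 2 ≤ z.arg → z.arg ≤ π / 2 + θ₀ →
      |(testphi ε z).re| * ‖testf 1 ε z‖ < |(testf 1 ε z).re| := by
  intro z hz h₁ h₂
  have hw : 0 < (z + ε * I).im := by simpa using add_pos hz hε
  have hw0 : z + ε * I ≠ 0 := ne_of_apply_ne im hw.ne'
  have hre := re_nonpos_of_pi_div_two_le_arg h₁
  have ht₁ : π / 2 ≤ arg (z + ε * I) := pi_div_two_le_arg_of_re_nonpos (by simpa) hw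
  have ht₂ : arg (z + ε * I) ≤ π / 2 + θ₀ := (arg_add_ofReal_mul_I_le hz hre hε.le).trans h₂
  have hcos := Real.abs_cos_lt_abs_cos_mul (a := 2 / 1 + ε) (by linarith) ht₁ (by nlinarith)
  rw [testphi_re hw0, abs_re_testf, mul_comm]
  exact mul_lt_mul_of_pos_left hcos (norm_testf_pos hw0)

theorem stmt5 (ε θ₀ : ℝ) (hε : 0 < ε) (hθ₀ : 0 < θ₀) (hθ₁ : θ₀ < π / 16)
    (h : (2 + ε) * (π / 2 + θ₀) < 5 * π / 4) :
    ∀ z : ℂ, 0 < z.im → π / 2 ≤ z.arg → z.arg ≤ π / 2 + θ₀ →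
      |(testphi ε z).re| * ‖testf 1 ε z‖ < |(testf 1 ε z).re| :=
  stmt5_general ε θ₀ hε h
end
end

section
/- Let 1 ≤ p < ∞, let 0 < δ < 1, and let μ be a σ-finite positive Borel measure on (0,∞). Then for every f ∈ A^p(𝕌), the truncated Hausdorff operator satisfies ||H_μ^δ(f)||_{A^p(𝕌)} ≤ (∫_δ^{1/δ} t^{2/p − 1} dμ(t)) · ||f||_{A^p(𝕌)}. -/
open MeasureTheory Complex Set Filter
open scoped ENNReal NNReal Topology Real

noncomputable section

/-- The truncated Hausdorff operator `H_μ^δ f z = ∫_{[δ,1/δ]} (1/t) f(z/t) dμ(t)`. -/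
def hausdorffTrunc (μ : Measure ℝ) (δ : ℝ) (f : ℂ → ℂ) (z : ℂ) : ℂ :=
  ∫ t in Icc δ (1/δ), (t : ℂ)⁻¹ * f (z / (t : ℂ)) ∂μ

/-! Pointwise `|H_μ^δ f(z)| ≤ ∫ |t⁻¹ f(z/t)| dμ(t)`, so Minkowski's integral inequality bounds
`‖H_μ^δ f‖_{A^p}` by `∫ ‖t⁻¹ f(·/t)‖_{A^p} dμ(t)`. The dilation `z ↦ z/t` preserves the half
plane and scales area by `t²`, whence `‖t⁻¹ f(·/t)‖_{A^p} = t^{2/p-1} ‖f‖_{A^p}`.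

Minkowski's inequality itself is Hölder's inequality applied to `(∫ g dμ)^p`, after truncating
this function so that its integral is finite and can be divided out. -/

section Minkowski

open Function

variable {α β : Type*} [MeasurableSpace α] [MeasurableSpace β] {μ : Measure α} {ν : Measure β}

lemma lintegral_le_of_forall_le_of_lintegral_lt_top [SigmaFinite ν] {f : β → ℝ≥0∞}
    (hf : Measurable f) {C : ℝ≥0∞}
    (h : ∀ φ : β → ℝ≥0∞, Measurable φ → φ ≤ f → ∫⁻ y, φ y ∂ν < ∞ → ∫⁻ y, φ y ∂ν ≤ C) :
    ∫⁻ y, f y ∂ν ≤ C := by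
  have hsup : ∀ y, ⨆ n : ℕ, min (f y) n = f y := fun y => by
    rw [← inf_iSup_eq, ENNReal.iSup_natCast, inf_top_eq]
  have hmono : Monotone fun (n : ℕ) y => min (f y) n := fun m n hmn y =>
    min_le_min_left _ (by exact_mod_cast hmn)
  calc ∫⁻ y, f y ∂ν = ∫⁻ y, ⨆ n : ℕ, min (f y) n ∂ν := by simp only [hsup]
    _ = ⨆ n : ℕ, ∫⁻ y, min (f y) n ∂ν :=
        lintegral_iSup (fun n => hf.min measurable_const) hmono
    _ ≤ C := iSup_le fun n => lintegral_le_of_forall_fin_meas_le C fun s hs hνs => by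
        rw [← lintegral_indicator hs]
        refine h _ ((hf.min measurable_const).indicator hs)
          (indicator_le fun y _ => min_le_left _ _) ?_
        calc ∫⁻ y, s.indicator (fun y => min (f y) n) y ∂ν
            ≤ ∫⁻ y, s.indicator (fun _ => (n : ℝ≥0∞)) y ∂ν :=
              lintegral_mono fun y => indicator_le_indicator (min_le_right _ _)
          _ < ∞ := by
              rw [lintegral_indicator_const hs]
              exact ENNReal.mul_lt_top (ENNReal.natCast_lt_top n) hνs.lt_top

lemma ENNReal.rpow_one_div_mul_rpow_one_div {p q : ℝ} (hpq : p.HolderConjugate q) (a : ℝ≥0∞) :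
    a ^ (1 / q) * a ^ (1 / p) = a := by
  rw [← ENNReal.rpow_add_of_nonneg _ _ (by simp [hpq.symm.nonneg]) (by simp [hpq.nonneg]),
    one_div, one_div, hpq.symm.inv_add_inv_eq_one, ENNReal.rpow_one]

lemma ENNReal.le_rpow_of_le_rpow_mul {p q : ℝ} (hpq : p.HolderConjugate q) {a b : ℝ≥0∞}
    (ha : a ≠ ∞) (h : a ≤ a ^ (1 / q) * b) : a ≤ b ^ p := by
  obtain rfl | ha0 := eq_or_ne a 0
  · exact zero_le
  rw [← ENNReal.rpow_inv_le_iff hpq.pos, ← one_div]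
  have hq : a ^ (1 / q) ≠ 0 := by simp [ENNReal.rpow_eq_zero_iff, ha0, ha]
  have hq' : a ^ (1 / q) ≠ ∞ := ENNReal.rpow_ne_top_of_nonneg (by simp [hpq.symm.nonneg]) ha
  exact (ENNReal.mul_le_mul_iff_right hq hq').mp
    ((ENNReal.rpow_one_div_mul_rpow_one_div hpq a).trans_le h)

lemma lintegral_le_rpow_mul_lintegral_rpow_lintegral [SFinite μ] [SFinite ν] {p q : ℝ}
    (hpq : p.HolderConjugate q) {g : α → β → ℝ≥0∞} (hg : Measurable (uncurry g))
    {φ : β → ℝ≥0∞} (hφ : Measurable φ) (hφg : ∀ y, φ y ≤ (∫⁻ x, g x y ∂μ) ^ p) :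
    ∫⁻ y, φ y ∂ν ≤ (∫⁻ y, φ y ∂ν) ^ (1 / q) * ∫⁻ x, (∫⁻ y, g x y ^ p ∂ν) ^ (1 / p) ∂μ := by
  calc ∫⁻ y, φ y ∂ν ≤ ∫⁻ y, φ y ^ (1 / q) * ∫⁻ x, g x y ∂μ ∂ν := lintegral_mono fun y => by
        calc φ y = φ y ^ (1 / q) * φ y ^ (1 / p) :=
            (ENNReal.rpow_one_div_mul_rpow_one_div hpq _).symm
          _ ≤ φ y ^ (1 / q) * ∫⁻ x, g x y ∂μ := by
            gcongr
            rw [one_div, ENNReal.rpow_inv_le_iff hpq.pos]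
            exact hφg y
    _ = ∫⁻ x, ∫⁻ y, φ y ^ (1 / q) * g x y ∂ν ∂μ := by
        have hm : Measurable (uncurry fun x y => φ y ^ (1 / q) * g x y) :=
          ((hφ.comp measurable_snd).pow_const _).mul hg
        rw [lintegral_lintegral_swap hm.aemeasurable]
        exact lintegral_congr fun y =>
          (lintegral_const_mul _ (hg.comp measurable_prodMk_right)).symm
    _ ≤ ∫⁻ x, (∫⁻ y, φ y ∂ν) ^ (1 / q) * (∫⁻ y, g x y ^ p ∂ν) ^ (1 / p) ∂μ :=
        lintegral_mono fun x => by
          simpa [← ENNReal.rpow_mul, hpq.symm.ne_zero] using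
            ENNReal.lintegral_mul_le_Lp_mul_Lq ν hpq.symm (hφ.pow_const (1 / q)).aemeasurable
              (hg.comp measurable_prodMk_left).aemeasurable
    _ = _ := lintegral_const_mul _ ((hg.pow_const p).lintegral_prod_right'.pow_const (1 / p))

/-- **Minkowski's integral inequality**. -/
theorem lintegral_rpow_lintegral_le [SFinite μ] [SigmaFinite ν] {p : ℝ} (hp : 1 ≤ p)
    {g : α → β → ℝ≥0∞} (hg : Measurable (uncurry g)) :
    (∫⁻ y, (∫⁻ x, g x y ∂μ) ^ p ∂ν) ^ (1 / p) ≤ ∫⁻ x, (∫⁻ y, g x y ^ p ∂ν) ^ (1 / p) ∂μ := by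
  obtain rfl | hp1 := hp.eq_or_lt
  · simpa using (lintegral_lintegral_swap (μ := μ) (ν := ν) hg.aemeasurable).ge
  have hpq := Real.HolderConjugate.conjExponent hp1
  rw [one_div, ENNReal.rpow_inv_le_iff hpq.pos, ← one_div]
  refine lintegral_le_of_forall_le_of_lintegral_lt_top (hg.lintegral_prod_left.pow_const p)
    fun φ hφ hφg hφν => ENNReal.le_rpow_of_le_rpow_mul hpq hφν.ne ?_
  exact lintegral_le_rpow_mul_lintegral_rpow_lintegral hpq hg hφ hφg

end Minkowski

lemma measurableSet_UHP : MeasurableSet UHP :=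
  (isOpen_lt continuous_const continuous_im).measurableSet

lemma div_ofReal_mem_UHP_iff {z : ℂ} {t : ℝ} (ht : 0 < t) : z / t ∈ UHP ↔ z ∈ UHP := by
  simp [UHP, div_pos_iff_of_pos_right ht]

lemma setLIntegral_UHP_comp_div_ofReal {t : ℝ} (ht : 0 < t) {h : ℂ → ℝ≥0∞} (hh : Measurable h) :
    ∫⁻ z in UHP, h (z / t) = ENNReal.ofReal (t ^ 2) * ∫⁻ z in UHP, h z := by
  have hsmul : Measurable fun z : ℂ => t⁻¹ • z := measurable_const_smul _
  have hdiv : ∀ z : ℂ, z / t = t⁻¹ • z := fun z => by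
    rw [Complex.real_smul, Complex.ofReal_inv, div_eq_inv_mul]
  have hpre : (fun z : ℂ => t⁻¹ • z) ⁻¹' UHP = UHP := by
    ext z; simp [← hdiv, div_ofReal_mem_UHP_iff ht]
  have hmap : Measure.map (fun z : ℂ => t⁻¹ • z) volume = ENNReal.ofReal (t ^ 2) • volume := by
    rw [Measure.map_addHaar_smul volume (inv_ne_zero ht.ne'), Complex.finrank_real_complex,
      inv_pow, inv_inv, abs_of_pos (by positivity)]
  simp_rw [hdiv]
  rw [← lintegral_map hh hsmul, ← hpre, ← Measure.restrict_map hsmul measurableSet_UHP, hpre,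
    hmap, Measure.restrict_smul, lintegral_smul_measure, smul_eq_mul]

-- An `ℝ≥0` scalar rather than `ENNReal.ofReal`, so that σ-finiteness is inferred.
def bergmanMeasure : Measure ℂ := (1 / π).toNNReal • volume.restrict UHP

instance : SigmaFinite bergmanMeasure := by
  unfold bergmanMeasure
  infer_instance

lemma apNorm_eq_lintegral (p : ℝ) (F : ℂ → ℂ) :
    apNorm p F = (∫⁻ z, ‖F z‖ₑ ^ p ∂bergmanMeasure) ^ (1 / p) := by
  rw [apNorm, apNormPow, bergmanMeasure, lintegral_smul_measure]
  rfl

lemma apNorm_congr {p : ℝ} {F G : ℂ → ℂ} (h : EqOn F G UHP) : apNorm p F = apNorm p G := by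
  rw [apNorm, apNormPow, setLIntegral_congr_fun measurableSet_UHP fun z hz => by rw [h hz]]
  rfl

lemma lintegral_bergmanMeasure_comp_div_ofReal {t : ℝ} (ht : 0 < t) {h : ℂ → ℝ≥0∞}
    (hh : Measurable h) :
    ∫⁻ z, h (z / t) ∂bergmanMeasure = ENNReal.ofReal (t ^ 2) * ∫⁻ z, h z ∂bergmanMeasure := by
  simp only [bergmanMeasure, lintegral_smul_measure, setLIntegral_UHP_comp_div_ofReal ht hh]
  exact (mul_smul_comm _ _ _).symm

lemma apNorm_dilation {p t : ℝ} (hp : 0 < p) (ht : 0 < t) {F : ℂ → ℂ} (hF : Measurable F) :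
    apNorm p (fun z => (t : ℂ)⁻¹ * F (z / t)) = ENNReal.ofReal (t ^ (2 / p - 1)) * apNorm p F := by
  have hnorm : ∀ z, ‖(t : ℂ)⁻¹ * F (z / t)‖ₑ ^ p = ENNReal.ofReal (t⁻¹ ^ p) * ‖F (z / t)‖ₑ ^ p :=
    fun z => by
      rw [enorm_mul, ENNReal.mul_rpow_of_nonneg _ _ hp.le, ← ofReal_inv, ← ofReal_norm (E := ℂ),
        norm_real, Real.norm_of_nonneg (by positivity), ENNReal.ofReal_rpow_of_pos (by positivity)]
  have hexp : (t⁻¹ ^ p * t ^ 2) ^ (1 / p) = t ^ (2 / p - 1) := by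
    rw [Real.inv_rpow ht.le, ← Real.rpow_neg ht.le, ← Real.rpow_natCast, ← Real.rpow_add ht,
      ← Real.rpow_mul ht.le]
    congr 1
    field_simp
    push_cast
    ring
  simp only [apNorm_eq_lintegral, hnorm]
  rw [lintegral_const_mul' _ _ ENNReal.ofReal_ne_top,
    lintegral_bergmanMeasure_comp_div_ofReal ht (hF.enorm.pow_const p), ← mul_assoc,
    ← ENNReal.ofReal_mul (by positivity), ENNReal.mul_rpow_of_nonneg _ _ (by positivity),
    ENNReal.ofReal_rpow_of_nonneg (by positivity) (by positivity), hexp]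

lemma apNorm_hausdorffTrunc_le {p δ : ℝ} (hp : 1 ≤ p) (hδ : 0 < δ) (μ : Measure ℝ) [SFinite μ]
    {F : ℂ → ℂ} (hF : Measurable F) :
    apNorm p (hausdorffTrunc μ δ F) ≤
      (∫⁻ t in Icc δ (1 / δ), ENNReal.ofReal (t ^ (2 / p - 1)) ∂μ) * apNorm p F := by
  have hg : Measurable (Function.uncurry fun (t : ℝ) (z : ℂ) => ‖(t : ℂ)⁻¹ * F (z / t)‖ₑ) := by
    fun_prop
  calc apNorm p (hausdorffTrunc μ δ F)
      ≤ (∫⁻ z, (∫⁻ t in Icc δ (1 / δ), ‖(t : ℂ)⁻¹ * F (z / t)‖ₑ ∂μ) ^ p ∂bergmanMeasure)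
          ^ (1 / p) := by
        rw [apNorm_eq_lintegral]
        gcongr with z
        exact enorm_integral_le_lintegral_enorm _
    _ ≤ ∫⁻ t in Icc δ (1 / δ), apNorm p (fun z => (t : ℂ)⁻¹ * F (z / t)) ∂μ := by
        simp only [apNorm_eq_lintegral]
        exact lintegral_rpow_lintegral_le hp hg
    _ = ∫⁻ t in Icc δ (1 / δ), ENNReal.ofReal (t ^ (2 / p - 1)) * apNorm p F ∂μ :=
        setLIntegral_congr_fun measurableSet_Icc fun t ht =>
          apNorm_dilation (by linarith) (hδ.trans_le ht.1) hF
    _ = _ := lintegral_mul_const _ (by fun_prop)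

theorem stmt10_general (p δ : ℝ) (hp : 1 ≤ p) (hδ0 : 0 < δ)
    (μ : Measure ℝ) [SigmaFinite μ] :
    ∀ f : ℂ → ℂ, MemAp p f →
      apNorm p (hausdorffTrunc μ δ f) ≤
        (∫⁻ t in Icc δ (1/δ), ENNReal.ofReal (t ^ (2 / p - 1)) ∂μ) * apNorm p f := by
  intro f hf
  classical
  -- `f` is arbitrary off `UHP`, where the norms do not look; its indicator is measurable.
  have hF : Measurable (UHP.indicator f) := by
    rw [← piecewise_eq_indicator]
    exact hf.1.continuousOn.measurable_piecewise continuousOn_const measurableSet_UHP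
  have hH : EqOn (hausdorffTrunc μ δ f) (hausdorffTrunc μ δ (UHP.indicator f)) UHP :=
    fun z hz => setIntegral_congr_fun measurableSet_Icc fun t ht => by
      rw [indicator_of_mem ((div_ofReal_mem_UHP_iff (hδ0.trans_le ht.1)).2 hz)]
  rw [apNorm_congr hH, apNorm_congr (fun z hz => (indicator_of_mem hz f).symm : EqOn f _ UHP)]
  exact apNorm_hausdorffTrunc_le hp hδ0 μ hF

theorem stmt10 (p δ : ℝ) (hp : 1 ≤ p) (hδ0 : 0 < δ) (hδ1 : δ < 1)
    (μ : Measure ℝ) [SigmaFinite μ] :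
    ∀ f : ℂ → ℂ, MemAp p f →
      apNorm p (hausdorffTrunc μ δ f) ≤
        (∫⁻ t in Icc δ (1/δ), ENNReal.ofReal (t ^ (2 / p - 1)) ∂μ) * apNorm p f :=
  stmt10_general p δ hp hδ0 μ
end
end
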